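/- Let k be a number field, let k_v be the completion of k at a nonarchimedean place v with valuation ring O_v, and let O = k ∩ O_v be the valuation subring of k determined by v. Let m ∈ ℤ_{>0} and suppose c ∈ k^× satisfies 1 + c·O_v ⊆ k_v^{×m}. Then k_v^{×m} ∩ k = (1 + c·O)·k^{×m}, i.e., a nonzero element t of k is an m-th power in k_v if and only if t = (1 + c·u)·s^m for some u ∈ O and s ∈ k^×. -/

import Mathlib

open IsDedekindDomain Topology

/-!
If `t = a ^ m` in `k_v`, approximate `a` by some `s ∈ k` with `|s - a|_v < |c|_v |a|_v`. Then
`|s|_v = |a|_v`, and by the ultrametric inequality `|t - s ^ m|_v ≤ |c|_v |s ^ m|_v`, i.e.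
`t = (1 + c u) s ^ m` with `u` integral at `v`. Conversely `1 + c u` is an `m`-th power in `k_v`
by hypothesis.
-/

theorem Valuation.map_pow_sub_pow_le {R Γ₀ : Type*} [CommRing R]
    [LinearOrderedCommMonoidWithZero Γ₀] (v : Valuation R Γ₀) {a b : R} {ε : Γ₀}
    (hb : v b ≤ v a) (hab : v (a - b) ≤ ε * v a) (m : ℕ) :
    v (a ^ m - b ^ m) ≤ ε * v a ^ m := by
  induction m with
  | zero => simp
  | succ m ih =>
    have hsplit : a ^ (m + 1) - b ^ (m + 1) = a ^ m * (a - b) + (a ^ m - b ^ m) * b := by ring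
    rw [hsplit]
    refine v.map_add_le ?_ ?_ <;> rw [v.map_mul]
    · calc v (a ^ m) * v (a - b) ≤ v a ^ m * (ε * v a) := by rw [v.map_pow]; gcongr
        _ = ε * v a ^ (m + 1) := by rw [pow_succ, mul_left_comm]
    · calc v (a ^ m - b ^ m) * v b ≤ ε * v a ^ m * v a := by gcongr
        _ = ε * v a ^ (m + 1) := by rw [pow_succ, mul_assoc]

theorem Valued.setOf_valuation_sub_lt_mem_nhds {R Γ₀ : Type*} [Ring R]
    [LinearOrderedCommGroupWithZero Γ₀] [Valued R Γ₀] (x : R) {b : R} (hb : Valued.v b ≠ 0) :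
    {y : R | Valued.v (y - x) < Valued.v b} ∈ 𝓝 x := by
  rw [Valued.mem_nhds]
  refine ⟨Units.mk0 _ ((Valued.v.restrict_pos_iff b).mpr (zero_lt_iff.mpr hb)).ne', ?_⟩
  intro y hy
  exact Valued.v.restrict_lt_iff.mp hy

section DenseSubfield

variable {Γ₀ k K : Type*} [LinearOrderedCommGroupWithZero Γ₀] [Field k] [Field K] [Valued K Γ₀]
  [Algebra k K]

theorem exists_eq_one_add_mul_mul_pow_of_pow_eq (hdense : DenseRange (algebraMap k K))
    {c t : k} (hc : c ≠ 0) {m : ℕ} {a : K} (ha : a ≠ 0) (hat : a ^ m = algebraMap k K t) :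
    ∃ u s : k, Valued.v (algebraMap k K u) ≤ 1 ∧ s ≠ 0 ∧ t = (1 + c * u) * s ^ m := by
  set φ := algebraMap k K
  have hva : Valued.v a ≠ 0 := by simpa using ha
  have hvca : Valued.v (φ c * a) ≠ 0 := by simpa using ⟨hc, ha⟩
  obtain ⟨s, hsa, hsca⟩ := hdense.mem_nhds (Filter.inter_mem
    (Valued.setOf_valuation_sub_lt_mem_nhds a hva)
    (Valued.setOf_valuation_sub_lt_mem_nhds a hvca))
  have hvs : Valued.v (φ s) = Valued.v a := Valuation.map_eq_of_sub_lt _ hsa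
  have hs : s ≠ 0 := by
    rintro rfl
    exact hva (by simpa using hvs.symm)
  have hpow : Valued.v (φ t - φ s ^ m) ≤ Valued.v (φ c) * Valued.v (φ s) ^ m := by
    rw [← hat, hvs]
    refine Valued.v.map_pow_sub_pow_le hvs.le ?_ m
    rw [Valuation.map_sub_swap, ← map_mul]
    exact hsca.le
  refine ⟨(t - s ^ m) / (c * s ^ m), s, ?_, hs, by field_simp; ring⟩
  rw [map_div₀, map_div₀, div_le_one₀ (zero_lt_iff.mpr (by simp [hc, hs]))]
  simpa using hpow

end DenseSubfield

theorem mth_powers_in_completion_eq_general (k : Type*) [Field k] [NumberField k]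
    (v : HeightOneSpectrum (NumberField.RingOfIntegers k)) (m : ℕ)
    (c : k) (hc : c ≠ 0)
    (hsub : ∀ u : v.adicCompletion k, u ∈ v.adicCompletionIntegers k →
      ∃ a : v.adicCompletion k, a ≠ 0 ∧
        a ^ m = 1 + algebraMap k (v.adicCompletion k) c * u) :
    {t : k | ∃ a : v.adicCompletion k, a ≠ 0 ∧ a ^ m = algebraMap k (v.adicCompletion k) t}
      = {t : k | ∃ u s : k,
          algebraMap k (v.adicCompletion k) u ∈ v.adicCompletionIntegers k ∧ s ≠ 0 ∧
          t = (1 + c * u) * s ^ m} := by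
  ext t
  constructor
  · rintro ⟨a, ha, hat⟩
    simpa only [Set.mem_ofPred_eq, HeightOneSpectrum.mem_adicCompletionIntegers] using
      exists_eq_one_add_mul_mul_pow_of_pow_eq (HeightOneSpectrum.denseRange_algebraMap k v) hc ha hat
  · rintro ⟨u, s, hu, hs, rfl⟩
    obtain ⟨a, ha, hau⟩ := hsub _ hu
    exact ⟨a * algebraMap k _ s, by simpa using ⟨ha, hs⟩, by simp [mul_pow, hau]⟩

/-- Let `k` be a number field, `v` a nonarchimedean place with completion `k_v` and valuation
ring `O_v`, and let `O = k ∩ O_v`. Let `m ∈ ℤ_{>0}` and suppose `c ∈ k^×` satisfies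
`1 + c·O_v ⊆ k_v^{×m}`. Then `k_v^{×m} ∩ k = (1 + c·O)·k^{×m}`. -/
theorem mth_powers_in_completion_eq (k : Type*) [Field k] [NumberField k]
    (v : HeightOneSpectrum (NumberField.RingOfIntegers k)) (m : ℕ) (hm : 0 < m)
    (c : k) (hc : c ≠ 0)
    (hsub : ∀ u : v.adicCompletion k, u ∈ v.adicCompletionIntegers k →
      ∃ a : v.adicCompletion k, a ≠ 0 ∧
        a ^ m = 1 + algebraMap k (v.adicCompletion k) c * u) :
    {t : k | ∃ a : v.adicCompletion k, a ≠ 0 ∧ a ^ m = algebraMap k (v.adicCompletion k) t}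
      = {t : k | ∃ u s : k,
          algebraMap k (v.adicCompletion k) u ∈ v.adicCompletionIntegers k ∧ s ≠ 0 ∧
          t = (1 + c * u) * s ^ m} :=
  mth_powers_in_completion_eq_general k v m c hc hsub
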